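/- arXiv:2310.05894 — 5 statements merged into one kernel-verified Lean document; each statement's English description precedes it below -/
import Mathlib

section
/- For any positive semidefinite S×S real matrices P₁ and P₂ with P₁ ⪯ P₂ (i.e., P₂ − P₁ is positive semidefinite), and for any S×m real matrix B and m×m positive definite matrix R, the matrix A^T (P₁ − P₁ B (R + B^T P₁ B)^{-1} B^T P₁) A ⪯ A^T (P₂ − P₂ B (R + B^T P₂ B)^{-1} B^T P₂) A for every S×S matrix A. -/
/-!
Write `M_P = R + Bᵀ P B`, `K_P = M_P⁻¹ Bᵀ P` and `Ric(P) = P - P B M_P⁻¹ Bᵀ P`.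
Completing the square in the gain `K` gives
`Kᵀ R K + (1 - B K)ᵀ P (1 - B K) = Ric(P) + (K - K_P)ᵀ M_P (K - K_P)`,
so `Ric(P)` is the minimum over `K` of a quadratic cost that is monotone in `P`.
Evaluating both costs at the optimal gain `K₂ = K_{P₂}` of `P₂` yields
`Ric(P₂) - Ric(P₁) = (1 - B K₂)ᵀ (P₂ - P₁) (1 - B K₂) + (K₂ - K₁)ᵀ M₁ (K₂ - K₁)`,
a sum of congruences of positive semidefinite matrices; conjugating by `A` preserves this.
-/

open Matrix

namespace Matrix

variable {n k α 𝕜 : Type*}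

section CommRing

variable [Fintype n] [DecidableEq n] [Fintype k] [DecidableEq k] [CommRing α]

noncomputable def riccatiGain (P : Matrix n n α) (B : Matrix n k α) (R : Matrix k k α) :
    Matrix k n α :=
  (R + Bᵀ * P * B)⁻¹ * Bᵀ * P

noncomputable def riccatiMap (P : Matrix n n α) (B : Matrix n k α) (R : Matrix k k α) :
    Matrix n n α :=
  P - P * B * (R + Bᵀ * P * B)⁻¹ * Bᵀ * P

variable {P : Matrix n n α} {B : Matrix n k α} {R : Matrix k k α}

theorem riccati_completion_of_squares (hP : Pᵀ = P) (hR : Rᵀ = R)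
    (hM : IsUnit (R + Bᵀ * P * B).det) (K : Matrix k n α) :
    Kᵀ * R * K + (1 - B * K)ᵀ * P * (1 - B * K)
      = riccatiMap P B R
        + (K - riccatiGain P B R)ᵀ * (R + Bᵀ * P * B) * (K - riccatiGain P B R) := by
  have hMt : (R + Bᵀ * P * B)ᵀ = R + Bᵀ * P * B := by
    simp only [transpose_add, transpose_mul, transpose_transpose, hP, hR, Matrix.mul_assoc]
  rw [riccatiMap, riccatiGain]
  generalize hMdef : R + Bᵀ * P * B = M at hM hMt ⊢
  obtain rfl : R = M - Bᵀ * P * B := by rw [← hMdef]; abel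
  simp only [Matrix.sub_mul, Matrix.mul_sub, transpose_sub, transpose_mul,
    transpose_one, Matrix.one_mul, Matrix.mul_one, transpose_transpose,
    transpose_nonsing_inv, hP, hMt, Matrix.mul_assoc,
    mul_nonsing_inv_cancel_left _ _ hM, nonsing_inv_mul _ hM]
  abel

theorem riccatiMap_eq_closedLoop (hP : Pᵀ = P) (hR : Rᵀ = R)
    (hM : IsUnit (R + Bᵀ * P * B).det) :
    riccatiMap P B R = (riccatiGain P B R)ᵀ * R * riccatiGain P B R
      + (1 - B * riccatiGain P B R)ᵀ * P * (1 - B * riccatiGain P B R) := by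
  rw [riccati_completion_of_squares hP hR hM, sub_self, transpose_zero, Matrix.zero_mul,
    Matrix.mul_zero, add_zero]

theorem riccatiMap_sub_riccatiMap {P₁ P₂ : Matrix n n α} (hP₁ : P₁ᵀ = P₁) (hP₂ : P₂ᵀ = P₂)
    (hR : Rᵀ = R) (hM₁ : IsUnit (R + Bᵀ * P₁ * B).det) (hM₂ : IsUnit (R + Bᵀ * P₂ * B).det) :
    riccatiMap P₂ B R - riccatiMap P₁ B R
      = (1 - B * riccatiGain P₂ B R)ᵀ * (P₂ - P₁) * (1 - B * riccatiGain P₂ B R)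
        + (riccatiGain P₂ B R - riccatiGain P₁ B R)ᵀ * (R + Bᵀ * P₁ * B)
          * (riccatiGain P₂ B R - riccatiGain P₁ B R) := by
  rw [riccatiMap_eq_closedLoop hP₂ hR hM₂,
    eq_sub_of_add_eq (riccati_completion_of_squares hP₁ hR hM₁ (riccatiGain P₂ B R)).symm]
  simp only [Matrix.mul_sub, Matrix.sub_mul]
  abel

end CommRing

section Ordered

variable [Field 𝕜] [PartialOrder 𝕜] [StarRing 𝕜] [TrivialStar 𝕜]

theorem PosSemidef.transpose_eq {P : Matrix n n 𝕜} (hP : P.PosSemidef) : Pᵀ = P :=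
  (isHermitian_iff_isSymm.mp hP.isHermitian).eq

theorem PosSemidef.transpose_mul_mul_same [Fintype n] [Finite k] {P : Matrix n n 𝕜}
    (hP : P.PosSemidef) (B : Matrix n k 𝕜) : (Bᵀ * P * B).PosSemidef := by
  simpa [conjTranspose_eq_transpose_of_trivial] using hP.conjTranspose_mul_mul_same B

theorem posSemidef_riccatiMap_sub_riccatiMap [Fintype n] [DecidableEq n] [Fintype k]
    [DecidableEq k] [AddLeftMono 𝕜] {P₁ P₂ : Matrix n n 𝕜} {B : Matrix n k 𝕜} {R : Matrix k k 𝕜}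
    (hP₁ : P₁.PosSemidef) (hle : (P₂ - P₁).PosSemidef) (hR : R.PosDef) :
    (riccatiMap P₂ B R - riccatiMap P₁ B R).PosSemidef := by
  have hP₂ : P₂.PosSemidef := by simpa using hP₁.add hle
  have hM₁ : (R + Bᵀ * P₁ * B).PosDef := hR.add_posSemidef (hP₁.transpose_mul_mul_same B)
  have hM₂ : (R + Bᵀ * P₂ * B).PosDef := hR.add_posSemidef (hP₂.transpose_mul_mul_same B)
  rw [riccatiMap_sub_riccatiMap hP₁.transpose_eq hP₂.transpose_eq hR.posSemidef.transpose_eq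
    ((isUnit_iff_isUnit_det _).mp hM₁.isUnit) ((isUnit_iff_isUnit_det _).mp hM₂.isUnit)]
  exact (hle.transpose_mul_mul_same _).add (hM₁.posSemidef.transpose_mul_mul_same _)

end Ordered

end Matrix

theorem riccati_map_monotone_general {S m : ℕ}
    (P₁ P₂ : Matrix (Fin S) (Fin S) ℝ)
    (hP₁ : P₁.PosSemidef)
    (hle : (P₂ - P₁).PosSemidef)
    (B : Matrix (Fin S) (Fin m) ℝ)
    (R : Matrix (Fin m) (Fin m) ℝ) (hR : R.PosDef)
    (A : Matrix (Fin S) (Fin S) ℝ) :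
    (Aᵀ * (P₂ - P₂ * B * (R + Bᵀ * P₂ * B)⁻¹ * Bᵀ * P₂) * A
      - Aᵀ * (P₁ - P₁ * B * (R + Bᵀ * P₁ * B)⁻¹ * Bᵀ * P₁) * A).PosSemidef := by
  rw [← Matrix.sub_mul, ← Matrix.mul_sub]
  exact (posSemidef_riccatiMap_sub_riccatiMap (B := B) hP₁ hle hR).transpose_mul_mul_same A

/-- Monotonicity of the Riccati-type map
`P ↦ Aᵀ (P − P B (R + Bᵀ P B)⁻¹ Bᵀ P) A` in the Loewner order. -/
theorem riccati_map_monotone {S m : ℕ}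
    (P₁ P₂ : Matrix (Fin S) (Fin S) ℝ)
    (hP₁ : P₁.PosSemidef) (hP₂ : P₂.PosSemidef)
    (hle : (P₂ - P₁).PosSemidef)
    (B : Matrix (Fin S) (Fin m) ℝ)
    (R : Matrix (Fin m) (Fin m) ℝ) (hR : R.PosDef)
    (A : Matrix (Fin S) (Fin S) ℝ) :
    (Aᵀ * (P₂ - P₂ * B * (R + Bᵀ * P₂ * B)⁻¹ * Bᵀ * P₂) * A
      - Aᵀ * (P₁ - P₁ * B * (R + Bᵀ * P₁ * B)⁻¹ * Bᵀ * P₁) * A).PosSemidef :=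
  riccati_map_monotone_general P₁ P₂ hP₁ hle B R hR A
end

section
/- Let B be a real S×m matrix of rank r > 0 with SVD B B^T = U^T Σ U where U is orthogonal and Σ = diag(Σ_r, 0) with Σ_r the r×r positive definite diagonal block. Then every positive definite S×S matrix T can be written as T = T_ker + T_0, where T_ker and T_0 are positive semidefinite, T_0 B = 0, and the left kernel of T_ker B equals the left kernel of T_ker. -/
open Matrix

noncomputable section PsdKernelAux

variable {S : ℕ}

/-- The orthogonal projection onto `K`, as a linear map on plain functions. -/
noncomputable def projL (K : Submodule ℝ (EuclideanSpace ℝ (Fin S))) :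
    (Fin S → ℝ) →ₗ[ℝ] (Fin S → ℝ) :=
  (WithLp.linearEquiv 2 ℝ (Fin S → ℝ)).toLinearMap ∘ₗ
    (K.subtype ∘ₗ (K.orthogonalProjectionOnto).toLinearMap) ∘ₗ
    (WithLp.linearEquiv 2 ℝ (Fin S → ℝ)).symm.toLinearMap

lemma projL_apply (K : Submodule ℝ (EuclideanSpace ℝ (Fin S))) (x : Fin S → ℝ) :
    projL K x = (WithLp.equiv 2 (Fin S → ℝ))
      (K.orthogonalProjectionOnto ((WithLp.equiv 2 (Fin S → ℝ)).symm x) :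
        EuclideanSpace ℝ (Fin S)) := rfl

lemma projL_mem (K : Submodule ℝ (EuclideanSpace ℝ (Fin S))) (x : Fin S → ℝ) :
    (WithLp.equiv 2 (Fin S → ℝ)).symm (projL K x) ∈ K := by
  rw [projL_apply]
  exact (K.orthogonalProjectionOnto ((WithLp.equiv 2 (Fin S → ℝ)).symm x)).2

lemma projL_self (K : Submodule ℝ (EuclideanSpace ℝ (Fin S))) {y : Fin S → ℝ}
    (hy : (WithLp.equiv 2 (Fin S → ℝ)).symm y ∈ K) : projL K y = y := by
  rw [projL_apply]
  exact congrArg (WithLp.equiv 2 (Fin S → ℝ)) (Submodule.starProjection_eq_self_iff.mpr hy)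

lemma projL_idem (K : Submodule ℝ (EuclideanSpace ℝ (Fin S))) (x : Fin S → ℝ) :
    projL K (projL K x) = projL K x :=
  projL_self K (projL_mem K x)

lemma projL_dot (K : Submodule ℝ (EuclideanSpace ℝ (Fin S))) (x y : Fin S → ℝ) :
    projL K x ⬝ᵥ y = x ⬝ᵥ projL K y := by
  have h := K.inner_starProjection_left_eq_right
    ((WithLp.equiv 2 (Fin S → ℝ)).symm x) ((WithLp.equiv 2 (Fin S → ℝ)).symm y)
  simp only [PiLp.inner_apply, RCLike.inner_apply, conj_trivial] at h
  simpa [dotProduct, projL_apply, mul_comm] using h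

/-- The matrix of the orthogonal projection onto `K`. -/
noncomputable def projMat (K : Submodule ℝ (EuclideanSpace ℝ (Fin S))) :
    Matrix (Fin S) (Fin S) ℝ :=
  LinearMap.toMatrix' (projL K)

lemma projMat_mulVec (K : Submodule ℝ (EuclideanSpace ℝ (Fin S))) (x : Fin S → ℝ) :
    projMat K *ᵥ x = projL K x := by
  rw [← Matrix.toLin'_apply, projMat, Matrix.toLin'_toMatrix']

lemma projMat_mul_self (K : Submodule ℝ (EuclideanSpace ℝ (Fin S))) :
    projMat K * projMat K = projMat K := by
  rw [projMat, ← LinearMap.toMatrix'_comp]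
  exact congrArg _ (LinearMap.ext fun x => projL_idem K x)

lemma projMat_apply (K : Submodule ℝ (EuclideanSpace ℝ (Fin S))) (i j : Fin S) :
    projMat K i j = projL K (Pi.single j 1) i := by
  have := congrFun (projMat_mulVec K (Pi.single j 1)) i
  rw [Matrix.mulVec_single] at this
  simpa using this

lemma projMat_transpose (K : Submodule ℝ (EuclideanSpace ℝ (Fin S))) :
    (projMat K)ᵀ = projMat K := by
  ext i j
  have h := projL_dot K (Pi.single j 1) (Pi.single i 1)
  rw [dotProduct_single, single_dotProduct, mul_one, one_mul] at h
  rw [Matrix.transpose_apply, projMat_apply, projMat_apply, h]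

open scoped MatrixOrder in
/-- Matrix square root. -/
noncomputable def msqrt (T : Matrix (Fin S) (Fin S) ℝ) : Matrix (Fin S) (Fin S) ℝ := CFC.sqrt T

open scoped MatrixOrder in
lemma msqrt_mul_self {T : Matrix (Fin S) (Fin S) ℝ} (h : T.PosSemidef) :
    msqrt T * msqrt T = T :=
  CFC.sqrt_mul_sqrt_self T h.nonneg

open scoped MatrixOrder in
lemma msqrt_posSemidef (T : Matrix (Fin S) (Fin S) ℝ) : (msqrt T).PosSemidef :=
  (CFC.sqrt_nonneg T).posSemidef

end PsdKernelAux


/-- PSD kernel decomposition: for a nonzero-rank matrix `B`, every positive definite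
`T` decomposes as `T = T_ker + T₀` with both summands PSD, `T₀ B = 0`, and the left
kernel of `T_ker * B` equal to the left kernel of `T_ker`. -/
theorem psd_kernel_decomposition {S m : ℕ}
    (B : Matrix (Fin S) (Fin m) ℝ) (hB : 0 < B.rank)
    (T : Matrix (Fin S) (Fin S) ℝ) (hT : T.PosDef) :
    ∃ Tker T0 : Matrix (Fin S) (Fin S) ℝ,
      Tker.PosSemidef ∧ T0.PosSemidef ∧ T = Tker + T0 ∧
      T0 * B = 0 ∧
      (∀ v : Fin S → ℝ, v ᵥ* (Tker * B) = 0 ↔ v ᵥ* Tker = 0) := by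
  classical
  have hTsd := hT.posSemidef
  set L := msqrt T with hLdef
  have hLL : L * L = T := msqrt_mul_self hTsd
  have hLh : Lᴴ = L := (msqrt_posSemidef T).1
  have hdet : IsUnit L.det := by
    have h1 : L.det * L.det = T.det := by rw [← Matrix.det_mul, hLL]
    have h2 : (0 : ℝ) < T.det := hT.det_pos
    refine isUnit_iff_ne_zero.mpr fun h => ?_
    rw [h, mul_zero] at h1
    exact h2.ne' h1.symm
  have hLinv : L * L⁻¹ = 1 := Matrix.mul_nonsing_inv L hdet
  set K : Submodule ℝ (EuclideanSpace ℝ (Fin S)) :=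
    Submodule.span ℝ (Set.range fun j : Fin m =>
      (WithLp.equiv 2 (Fin S → ℝ)).symm fun i => (L * B) i j) with hKdef
  set P := projMat K with hPdef
  have hPP : P * P = P := projMat_mul_self K
  have hPt : Pᵀ = P := projMat_transpose K
  have hPh : Pᴴ = P := by rw [Matrix.conjTranspose_eq_transpose_of_trivial, hPt]
  have hPC : P * (L * B) = L * B := by
    ext i j
    have hmem : (WithLp.equiv 2 (Fin S → ℝ)).symm (fun i => (L * B) i j) ∈ K :=
      Submodule.subset_span ⟨j, rfl⟩
    have h := congrFun (projMat_mulVec K fun i => (L * B) i j) i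
    rw [projL_self K hmem] at h
    simpa [Matrix.mul_apply, Matrix.mulVec, dotProduct] using h
  have hPpsd : P.PosSemidef := by
    have : P = Pᴴ * P := by rw [hPh, hPP]
    rw [this]; exact Matrix.posSemidef_conjTranspose_mul_self P
  have hQpsd : (1 - P).PosSemidef := by
    have hQQ : (1 - P) * (1 - P) = 1 - P := by
      rw [Matrix.mul_sub, Matrix.sub_mul, Matrix.sub_mul, hPP]
      simp
    have : 1 - P = (1 - P)ᴴ * (1 - P) := by
      rw [Matrix.conjTranspose_sub, Matrix.conjTranspose_one, hPh, hQQ]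
    rw [this]; exact Matrix.posSemidef_conjTranspose_mul_self _
  refine ⟨L * P * L, L * (1 - P) * L, ?_, ?_, ?_, ?_, ?_⟩
  · have := hPpsd.conjTranspose_mul_mul_same L
    rwa [hLh] at this
  · have := hQpsd.conjTranspose_mul_mul_same L
    rwa [hLh] at this
  · rw [← hLL]; noncomm_ring
  · calc L * (1 - P) * L * B = L * ((1 - P) * (L * B)) := by
          rw [Matrix.mul_assoc (L * (1 - P)) L B, Matrix.mul_assoc L (1 - P) (L * B)]
      _ = 0 := by rw [Matrix.sub_mul, hPC, Matrix.one_mul, sub_self, Matrix.mul_zero]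
  · intro v
    have key : ∀ w : Fin S → ℝ, (w ᵥ* P) ᵥ* (L * B) = 0 ↔ w ᵥ* P = 0 := by
      intro w
      constructor
      · intro h
        set u := w ᵥ* P with hudef
        have hu : u = projL K w := by
          rw [hudef, ← projMat_mulVec K w, ← hPt, Matrix.vecMul_transpose]
        have humem : (WithLp.equiv 2 (Fin S → ℝ)).symm u ∈ K := hu ▸ projL_mem K w
        have huperp : (WithLp.equiv 2 (Fin S → ℝ)).symm u ∈ Kᗮ := by
          rw [hKdef]
          intro x hx
          refine Submodule.span_induction (fun y hy => ?_) ?_ (fun a b _ _ ha hb => ?_)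
            (fun c a _ ha => ?_) hx
          · obtain ⟨j, rfl⟩ := hy
            have hj := congrFun h j
            simp only [Pi.zero_apply, Matrix.vecMul, dotProduct] at hj
            simp only [PiLp.inner_apply, RCLike.inner_apply, starRingEnd_apply, star_trivial]
            simpa [mul_comm] using hj
          · simp
          · rw [inner_add_left, ha, hb, add_zero]
          · rw [real_inner_smul_left, ha, mul_zero]
        have : (WithLp.equiv 2 (Fin S → ℝ)).symm u = 0 :=
          Submodule.disjoint_def.mp K.orthogonal_disjoint _ humem huperp
        exact (WithLp.equiv 2 (Fin S → ℝ)).symm.injective this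
      · intro h; rw [h, Matrix.zero_vecMul]
    have e1 : v ᵥ* (L * P * L * B) = ((v ᵥ* L) ᵥ* P) ᵥ* (L * B) := by
      rw [Matrix.mul_assoc (L * P) L B, Matrix.mul_assoc L P (L * B),
        ← Matrix.vecMul_vecMul, ← Matrix.vecMul_vecMul]
    have e2 : v ᵥ* (L * P * L) = ((v ᵥ* L) ᵥ* P) ᵥ* L := by
      rw [← Matrix.vecMul_vecMul, ← Matrix.vecMul_vecMul]
    have e3 : ((v ᵥ* L) ᵥ* P) ᵥ* L = 0 ↔ (v ᵥ* L) ᵥ* P = 0 := by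
      constructor
      · intro h
        have h4 : (((v ᵥ* L) ᵥ* P) ᵥ* L) ᵥ* L⁻¹ = (v ᵥ* L) ᵥ* P := by
          rw [Matrix.vecMul_vecMul, hLinv, Matrix.vecMul_one]
        rw [h, Matrix.zero_vecMul] at h4
        exact h4.symm
      · intro h; rw [h, Matrix.zero_vecMul]
    rw [e1, e2, key (v ᵥ* L)]
    exact e3.symm
end

section
/- Let A be a symmetric n×n real matrix with eigendecomposition A = V Λ V^T (V orthogonal), let δ ∈ (1 − ρ(A)^{-2}, 1], and Q positive definite. If a positive definite matrix P satisfies P ⪰ (1−δ) A P A + Q (Loewner order, A symmetric), then P ⪰ σ_min(V^T Q V) · V (I − (1−δ) Λ²)^{-1} V^T, where σ_min denotes the minimum eigenvalue. -/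
open Matrix

/-- Spectral radius of a real square matrix. -/
noncomputable def specRad {ι : Type*} [Fintype ι] [DecidableEq ι]
    (A : Matrix ι ι ℝ) : ℝ :=
  sSup ((fun z : ℂ => ‖z‖) '' spectrum ℂ (A.map Complex.ofReal))

/-- Minimum (real) eigenvalue of a real square matrix. -/
noncomputable def minEig {ι : Type*} [Fintype ι] [DecidableEq ι]
    (M : Matrix ι ι ℝ) : ℝ :=
  sInf (spectrum ℝ M)


lemma contraction_psd {n : ℕ} (dv : Fin n → ℝ) (hd : ∀ i, |dv i| < 1)
    (M : Matrix (Fin n) (Fin n) ℝ) (hM : M.IsHermitian)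
    (h : (M - diagonal dv * M * diagonal dv).PosSemidef) : M.PosSemidef := by
  refine posSemidef_iff_dotProduct_mulVec.mpr ⟨hM, fun x => ?_⟩
  have hsx : star x = x := funext fun i => star_trivial _
  rw [hsx]
  have key : ∀ y : Fin n → ℝ,
      ((diagonal dv) *ᵥ y) ⬝ᵥ M *ᵥ ((diagonal dv) *ᵥ y) ≤ y ⬝ᵥ M *ᵥ y := by
    intro y
    have h2 := h.dotProduct_mulVec_nonneg y
    rw [show star y = y from funext fun i => star_trivial _, sub_mulVec, dotProduct_sub, sub_nonneg] at h2
    refine le_trans (le_of_eq ?_) h2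
    rw [← mulVec_mulVec, ← mulVec_mulVec]
    simp only [dotProduct, mulVec_diagonal]
    exact Finset.sum_congr rfl fun i _ => by ring
  set g : ℕ → ℝ := fun K => (fun i => dv i ^ K * x i) ⬝ᵥ M *ᵥ (fun i => dv i ^ K * x i) with hg
  have hstep : ∀ K : ℕ, (diagonal dv) *ᵥ (fun i => dv i ^ K * x i)
      = fun i => dv i ^ (K+1) * x i := by
    intro K; funext i; simp [mulVec_diagonal, pow_succ]; ring
  have mono : ∀ K, g K ≤ x ⬝ᵥ M *ᵥ x := by
    intro K
    induction K with
    | zero => simp [hg]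
    | succ K ih =>
      refine le_trans ?_ ih
      have := key (fun i => dv i ^ K * x i)
      rwa [hstep K] at this
  have gform : ∀ K, g K = ∑ i, ∑ j, (dv i * dv j) ^ K * (x i * M i j * x j) := by
    intro K
    simp only [hg, dotProduct, mulVec, Finset.mul_sum]
    exact Finset.sum_congr rfl fun i _ => Finset.sum_congr rfl fun j _ => by
      rw [mul_pow]; ring
  have gt0 : Filter.Tendsto g Filter.atTop (nhds 0) := by
    have : ∀ K, g K = ∑ ij : Fin n × Fin n, (dv ij.1 * dv ij.2) ^ K * (x ij.1 * M ij.1 ij.2 * x ij.2) := by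
      intro K; rw [gform, ← Finset.sum_product']
      rfl
    rw [funext this]
    have : (0:ℝ) = ∑ ij : Fin n × Fin n, (0:ℝ) := by simp
    rw [this]
    refine tendsto_finset_sum _ fun ij _ => ?_
    have habs : |dv ij.1 * dv ij.2| < 1 := by
      rw [abs_mul]
      nlinarith [hd ij.1, hd ij.2, abs_nonneg (dv ij.1), abs_nonneg (dv ij.2)]
    simpa using (tendsto_pow_atTop_nhds_zero_of_abs_lt_one habs).mul_const _
  exact le_of_tendsto' gt0 mono


lemma sub_minEig_smul_one_psd {n : ℕ} (R : Matrix (Fin n) (Fin n) ℝ) (hR : R.IsHermitian) :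
    (R - sInf (spectrum ℝ R) • 1).PosSemidef := by
  set c := sInf (spectrum ℝ R) with hc
  have hbdd : BddBelow (spectrum ℝ R) := (R.finite_spectrum).bddBelow
  have hle : ∀ i, c ≤ hR.eigenvalues i :=
    fun i => csInf_le hbdd (hR.eigenvalues_mem_spectrum_real i)
  set U : Matrix (Fin n) (Fin n) ℝ := (hR.eigenvectorUnitary : Matrix (Fin n) (Fin n) ℝ) with hUdef
  have hU : U * star U = 1 := (Matrix.mem_unitaryGroup_iff).mp (hR.eigenvectorUnitary).2
  have key : R - c • 1 = U * (diagonal (fun i => hR.eigenvalues i - c)) * (star U) := by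
    have h1 : (c • 1 : Matrix (Fin n) (Fin n) ℝ) = U * (c • 1) * star U := by
      rw [Matrix.mul_smul, Matrix.mul_one, Matrix.smul_mul, hU]
    conv_lhs => rw [hR.spectral_theorem, h1]
    rw [Unitary.conjStarAlgAut_apply, ← hUdef, ← Matrix.sub_mul, ← Matrix.mul_sub]
    congr 1
    rw [smul_one_eq_diagonal, diagonal_sub]
    rfl
  rw [key]
  have := (posSemidef_diagonal_iff.mpr (fun i => sub_nonneg.mpr (hle i))).mul_mul_conjTranspose_same U
  exact this

lemma eig_le_specRad {n : ℕ} (A V Λ : Matrix (Fin n) (Fin n) ℝ)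
    (hdecomp : A = V * Λ * Vᵀ) (hV₁ : Vᵀ * V = 1) (hV₂ : V * Vᵀ = 1)
    (hΛ : ∀ i j, i ≠ j → Λ i j = 0) (i : Fin n) :
    |Λ i i| ≤ specRad A := by
  classical
  have hΛd : Λ = diagonal (fun j => Λ j j) := by
    ext a b
    by_cases h : a = b
    · subst h; simp
    · simp [diagonal_apply_ne _ h, hΛ a b h]
  set lam := Λ i i with hlam
  have h1 : lam • (1 : Matrix (Fin n) (Fin n) ℝ) - A = V * (lam • 1 - Λ) * Vᵀ := by
    rw [Matrix.mul_sub, Matrix.sub_mul, hdecomp, Matrix.mul_smul, Matrix.mul_one,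
      Matrix.smul_mul, hV₂]
  have hdet : (lam • (1 : Matrix (Fin n) (Fin n) ℝ) - A).det = 0 := by
    rw [h1, det_mul, det_mul]
    have h2 : lam • (1 : Matrix (Fin n) (Fin n) ℝ) - Λ = diagonal (fun j => lam - Λ j j) := by
      rw [smul_one_eq_diagonal]
      conv_lhs => rw [hΛd]
      rw [diagonal_sub]
    rw [h2, det_diagonal, Finset.prod_eq_zero (Finset.mem_univ i) (sub_self lam)]
    ring
  have hmem : (lam : ℂ) ∈ spectrum ℂ (A.map Complex.ofReal) := by
    rw [spectrum.mem_iff]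
    intro hu
    rw [Matrix.isUnit_iff_isUnit_det] at hu
    have heq : (algebraMap ℂ (Matrix (Fin n) (Fin n) ℂ) (lam:ℂ)) - A.map Complex.ofReal
        = (lam • (1 : Matrix (Fin n) (Fin n) ℝ) - A).map Complex.ofRealHom := by
      ext a b
      simp [Matrix.algebraMap_matrix_apply, Matrix.one_apply]
      split_ifs <;> simp
    rw [heq, show ((lam • (1 : Matrix (Fin n) (Fin n) ℝ) - A).map ⇑Complex.ofRealHom) = Complex.ofRealHom.mapMatrix (lam • (1 : Matrix (Fin n) (Fin n) ℝ) - A) from rfl, ← RingHom.map_det] at hu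
    rw [hdet] at hu
    simp at hu
  have himg : |lam| ∈ (fun z : ℂ => ‖z‖) '' spectrum ℂ (A.map Complex.ofReal) :=
    ⟨(lam : ℂ), hmem, by simp⟩
  exact le_csSup (((A.map Complex.ofReal).finite_spectrum.image _).bddAbove) himg

/-- Lower bound for a positive definite `P` satisfying `P ⪰ (1−δ) A P A + Q`
with symmetric `A = V Λ Vᵀ` (`V` orthogonal, `Λ` diagonal),
`δ ∈ (1 − ρ(A)⁻², 1]`, and `Q` positive definite:
`P ⪰ σ_min(Vᵀ Q V) · V (I − (1−δ) Λ²)⁻¹ Vᵀ`. -/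
theorem lyapunov_solution_lower_bound {n : ℕ}
    (A V Λ : Matrix (Fin n) (Fin n) ℝ)
    (hAs : A.IsSymm) (hdecomp : A = V * Λ * Vᵀ)
    (hV₁ : Vᵀ * V = 1) (hV₂ : V * Vᵀ = 1)
    (hΛ : ∀ i j, i ≠ j → Λ i j = 0)
    (δ : ℝ) (hδl : 1 - (specRad A ^ 2)⁻¹ < δ) (hδu : δ ≤ 1)
    (Q P : Matrix (Fin n) (Fin n) ℝ) (hQ : Q.PosDef) (hP : P.PosDef)
    (hineq : (P - ((1 - δ) • (A * P * A) + Q)).PosSemidef) :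
    (P - minEig (Vᵀ * Q * V) • (V * (1 - (1 - δ) • (Λ * Λ))⁻¹ * Vᵀ)).PosSemidef := by
  classical
  have hct : ∀ (M : Matrix (Fin n) (Fin n) ℝ), Mᴴ = Mᵀ := fun M => by
    ext a b; simp [conjTranspose_apply]
  have hcancel : ∀ X : Matrix (Fin n) (Fin n) ℝ, Vᵀ * (V * X) = X := fun X => by
    rw [← Matrix.mul_assoc, hV₁, Matrix.one_mul]
  have hcancel' : ∀ X : Matrix (Fin n) (Fin n) ℝ, V * (Vᵀ * X) = X := fun X => by
    rw [← Matrix.mul_assoc, hV₂, Matrix.one_mul]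
  have h1δ : 0 ≤ 1 - δ := by linarith
  set c := minEig (Vᵀ * Q * V) with hc
  -- eigenvalue bound
  have hlt : ∀ i, (1 - δ) * (Λ i i) ^ 2 < 1 := by
    intro i
    have hle := eig_le_specRad A V Λ hdecomp hV₁ hV₂ hΛ i
    have h0 : (0:ℝ) ≤ specRad A := le_trans (abs_nonneg _) hle
    rcases eq_or_lt_of_le h0 with h0' | hpos
    · exfalso
      rw [← h0'] at hδl
      norm_num at hδl
      linarith
    · have hs2 : 0 < (specRad A) ^ 2 := by positivity
      have h2 : 1 - δ < ((specRad A) ^ 2)⁻¹ := by linarith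
      have h3 : (1 - δ) * (specRad A) ^ 2 < 1 := by
        have := (inv_mul_cancel₀ (ne_of_gt hs2))
        nlinarith
      have h4 : (Λ i i) ^ 2 ≤ (specRad A) ^ 2 := by
        nlinarith [abs_nonneg (Λ i i), sq_abs (Λ i i)]
      nlinarith
  set d : Fin n → ℝ := fun i => 1 - (1 - δ) * (Λ i i) ^ 2 with hd
  have hdpos : ∀ i, 0 < d i := fun i => by
    have := hlt i; simp only [hd]; linarith
  have hΛd : Λ = diagonal (fun j => Λ j j) := by
    ext a b
    by_cases h : a = b
    · subst h; simp
    · simp [diagonal_apply_ne _ h, hΛ a b h]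
  -- inverse of 1 - (1-δ)Λ²
  have hD : (1 - (1 - δ) • (Λ * Λ)) = diagonal d := by
    conv_lhs => rw [hΛd]
    rw [diagonal_mul_diagonal]
    ext a b
    by_cases h : a = b
    · subst h; simp [hd, pow_two]
    · simp [one_apply_ne h, diagonal_apply_ne _ h]
  have hDinv : (1 - (1 - δ) • (Λ * Λ))⁻¹ = diagonal (fun i => (d i)⁻¹) := by
    rw [hD]
    apply inv_eq_right_inv
    rw [diagonal_mul_diagonal]
    ext a b
    by_cases h : a = b
    · subst h; simp [mul_inv_cancel₀ (ne_of_gt (hdpos a))]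
    · simp [one_apply_ne h, diagonal_apply_ne _ h]
  set Dinv : Matrix (Fin n) (Fin n) ℝ := diagonal (fun i => (d i)⁻¹) with hDinvdef
  set B : Matrix (Fin n) (Fin n) ℝ := Vᵀ * P * V with hB
  set R : Matrix (Fin n) (Fin n) ℝ := Vᵀ * Q * V with hR
  -- conjugated hypothesis
  have hBR : (B - ((1 - δ) • (Λ * B * Λ) + R)).PosSemidef := by
    have h := hineq.conjTranspose_mul_mul_same V
    rw [hct] at h
    have hexp : Vᵀ * (P - ((1 - δ) • (A * P * A) + Q)) * V
        = B - ((1 - δ) • (Λ * B * Λ) + R) := by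
      simp only [hB, hR, hdecomp, Matrix.mul_sub, Matrix.sub_mul, Matrix.mul_add,
        Matrix.add_mul, Matrix.mul_smul, Matrix.smul_mul, Matrix.mul_assoc, hcancel,
        hV₁, Matrix.mul_one]
    rwa [hexp] at h
  -- R hermitian and min-eigenvalue bound
  have hRherm : R.IsHermitian := by
    have := Matrix.isHermitian_conjTranspose_mul_mul V hQ.1
    rwa [hct] at this
  have hRc : (R - c • 1).PosSemidef := by
    have := sub_minEig_smul_one_psd R hRherm
    rwa [hc, minEig]
  -- key diagonal identity
  have identity1 : Dinv - (1 - δ) • (Λ * Dinv * Λ) = (1 : Matrix (Fin n) (Fin n) ℝ) := by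
    rw [hDinvdef]
    conv_lhs => rw [hΛd]
    rw [diagonal_mul_diagonal, diagonal_mul_diagonal]
    ext a b
    by_cases h : a = b
    · subst h
      simp only [Matrix.sub_apply, Matrix.smul_apply, diagonal_apply_eq,
        Matrix.one_apply_eq, smul_eq_mul]
      field_simp [ne_of_gt (hdpos a)]
      simp only [hd]
    · simp [one_apply_ne h, diagonal_apply_ne _ h]
  -- the matrix M
  set M : Matrix (Fin n) (Fin n) ℝ := B - c • Dinv with hM
  have hBh : B.IsHermitian := by
    have := Matrix.isHermitian_conjTranspose_mul_mul V hP.1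
    rwa [hct] at this
  have hDh : Dinv.IsHermitian := by
    show Dinvᴴ = Dinv
    rw [hct, hDinvdef, diagonal_transpose]
  have hMherm : M.IsHermitian := by
    show Mᴴ = M
    rw [hM, conjTranspose_sub, conjTranspose_smul, hBh.eq, hDh.eq, star_trivial]
  set dv : Fin n → ℝ := fun i => Real.sqrt (1 - δ) * Λ i i with hdv
  have hdvlt : ∀ i, |dv i| < 1 := by
    intro i
    have hsq : (dv i) ^ 2 = (1 - δ) * (Λ i i) ^ 2 := by
      simp only [hdv]
      rw [mul_pow, Real.sq_sqrt h1δ]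
    have := hlt i
    nlinarith [abs_nonneg (dv i), sq_abs (dv i)]
  have hDμ : diagonal dv = Real.sqrt (1 - δ) • Λ := by
    conv_rhs => rw [hΛd]
    rw [← diagonal_smul]
    rfl
  have hMpsd : M.PosSemidef := by
    apply contraction_psd dv hdvlt M hMherm
    have hDMD : diagonal dv * M * diagonal dv = (1 - δ) • (Λ * M * Λ) := by
      rw [hDμ]
      simp only [Matrix.smul_mul, Matrix.mul_smul, smul_smul]
      rw [Real.mul_self_sqrt h1δ]
    rw [hDMD]
    have expand : M - (1 - δ) • (Λ * M * Λ)
        = (B - ((1 - δ) • (Λ * B * Λ) + R)) + (R - c • (Dinv - (1 - δ) • (Λ * Dinv * Λ))) := by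
      rw [hM]
      simp only [Matrix.mul_sub, Matrix.sub_mul, Matrix.mul_smul, Matrix.smul_mul,
        smul_sub, smul_smul]
      module
    rw [expand, identity1]
    exact hBR.add hRc
  have final := hMpsd.mul_mul_conjTranspose_same V
  rw [hct] at final
  have hgoal : P - c • (V * (1 - (1 - δ) • (Λ * Λ))⁻¹ * Vᵀ) = V * M * Vᵀ := by
    rw [hDinv, hM]
    simp only [Matrix.mul_sub, Matrix.sub_mul, Matrix.mul_smul, Matrix.smul_mul, hB]
    congr 1
    simp only [Matrix.mul_assoc, hcancel', hV₂, Matrix.mul_one]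
  rw [hgoal]
  exact final
end

section
/- Let M₁,…,M_m be n×n real matrices and p₁,…,p_m nonnegative reals summing to at most 1. If ρ(Σᵢ pᵢ Mᵢ ⊗ Mᵢ) < 1, then for every symmetric positive definite C the map T ↦ Σᵢ pᵢ Mᵢ^T T Mᵢ + C has a unique symmetric fixed point T*, and T* is positive definite and satisfies T* ⪰ C. -/
open Matrix Filter
open scoped Kronecker Topology

attribute [local instance] Matrix.linftyOpNormedRing Matrix.linftyOpNormedAlgebra
  Matrix.linftyOpNormedSpace Matrix.linftyOpNormedAddCommGroup

lemma pow_tendsto_zero_of_spectralRadius_lt_one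
    {A : Type*} [NormedRing A] [NormedAlgebra ℂ A] [CompleteSpace A]
    {a : A} (h : spectralRadius ℂ a < 1) :
    Tendsto (fun k : ℕ => ‖a ^ k‖) atTop (𝓝 0) := by
  obtain ⟨r, hr1, hr2⟩ := ENNReal.lt_iff_exists_nnreal_btwn.mp h
  have hgel := spectrum.pow_nnnorm_pow_one_div_tendsto_nhds_spectralRadius a
  have hev : ∀ᶠ k : ℕ in atTop, (‖a ^ k‖₊ : ENNReal) ^ (1 / (k:ℝ)) < r :=
    hgel.eventually_lt_const hr1
  have hev2 : ∀ᶠ k : ℕ in atTop, ‖a ^ k‖ ≤ (r:ℝ) ^ k := by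
    filter_upwards [hev, eventually_ge_atTop 1] with k hk hk1
    have hkpos : (0:ℝ) < k := by exact_mod_cast hk1
    have h2 := ENNReal.rpow_lt_rpow hk (by positivity : (0:ℝ) < (k:ℝ))
    rw [← ENNReal.rpow_mul, one_div, inv_mul_cancel₀ (ne_of_gt hkpos), ENNReal.rpow_one,
      ENNReal.rpow_natCast, ← ENNReal.coe_pow, ENNReal.coe_lt_coe] at h2
    calc ‖a ^ k‖ = ((‖a ^ k‖₊ : ℝ)) := rfl
    _ ≤ ((r ^ k : NNReal) : ℝ) := by exact_mod_cast h2.le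
    _ = (r:ℝ) ^ k := by push_cast; ring
  have hrlt : (r:ℝ) < 1 := by exact_mod_cast hr2
  exact squeeze_zero' (Eventually.of_forall fun k => norm_nonneg _) hev2
    (tendsto_pow_atTop_nhds_zero_of_lt_one r.coe_nonneg hrlt)

lemma spectralRadius_lt_one_of_specRad {ι : Type*} [Fintype ι] [DecidableEq ι]
    {A : Matrix ι ι ℝ} (h : specRad A < 1) :
    spectralRadius ℂ (A.map Complex.ofReal) < 1 := by
  set B := A.map Complex.ofReal
  have hcpt : IsCompact (spectrum ℂ B) := spectrum.isCompact B
  have hbdd : BddAbove ((fun z : ℂ => ‖z‖) '' spectrum ℂ B) :=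
    (hcpt.image (by continuity)).bddAbove
  have hle : spectralRadius ℂ B ≤ ENNReal.ofReal (specRad A) := by
    rw [spectralRadius]
    refine iSup₂_le fun z hz => ?_
    have : ‖z‖ ≤ specRad A := le_csSup hbdd ⟨z, hz, rfl⟩
    calc (‖z‖₊ : ENNReal) = ENNReal.ofReal ‖z‖ := (ofReal_norm z).symm
    _ ≤ _ := ENNReal.ofReal_le_ofReal this
  exact lt_of_le_of_lt hle (by simpa using ENNReal.ofReal_lt_one.mpr h)

lemma entry_norm_le_linfty {ι : Type*} [Fintype ι] (C : Matrix ι ι ℂ) (i j : ι) :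
    ‖C i j‖ ≤ ‖C‖ := by
  have h : ‖C i j‖₊ ≤ ‖C‖₊ := by
    rw [Matrix.linfty_opNNNorm_def]
    refine le_trans ?_ (Finset.le_sup (f := fun i => ∑ j, ‖C i j‖₊) (Finset.mem_univ i))
    exact Finset.single_le_sum (f := fun j => ‖C i j‖₊) (fun a _ => zero_le) (Finset.mem_univ j)
  exact_mod_cast h

lemma entry_pow_tendsto_zero {ι : Type*} [Fintype ι] [DecidableEq ι]
    {A : Matrix ι ι ℝ} (h : specRad A < 1) (i j : ι) :
    Tendsto (fun k : ℕ => (A ^ k) i j) atTop (𝓝 0) := by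
  have hpow : Tendsto (fun k : ℕ => ‖(A.map Complex.ofReal) ^ k‖) atTop (𝓝 0) :=
    pow_tendsto_zero_of_spectralRadius_lt_one (spectralRadius_lt_one_of_specRad h)
  refine squeeze_zero_norm (fun k => ?_) hpow
  have hmap : (A.map Complex.ofReal) ^ k = (A ^ k).map Complex.ofReal := by
    have : A.map Complex.ofReal = Complex.ofRealHom.mapMatrix A := rfl
    rw [this, ← map_pow]; rfl
  calc ‖(A ^ k) i j‖ = ‖((A ^ k).map Complex.ofReal) i j‖ := by
        simp [Matrix.map_apply]
  _ ≤ ‖(A ^ k).map Complex.ofReal‖ := entry_norm_le_linfty _ i j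
  _ = ‖(A.map Complex.ofReal) ^ k‖ := by rw [hmap]

lemma kron_mulVec {ι : Type*} [Fintype ι] (N P T : Matrix ι ι ℝ) :
    (N ⊗ₖ P) *ᵥ (fun q : ι × ι => T q.1 q.2) = fun q : ι × ι => (N * T * Pᵀ) q.1 q.2 := by
  funext q
  simp only [Matrix.mulVec, dotProduct, Matrix.kroneckerMap_apply, Matrix.mul_apply,
    Matrix.transpose_apply, Fintype.sum_prod_type]
  simp only [Finset.sum_mul, Finset.mul_sum]
  rw [Finset.sum_comm]
  exact Finset.sum_congr rfl fun a _ => Finset.sum_congr rfl fun b _ => by ring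

lemma sum_smul_mulVec {ι κ : Type*} [Fintype ι] [Fintype κ] (c : ι → ℝ)
    (K : ι → Matrix κ κ ℝ) (v : κ → ℝ) :
    (∑ i, c i • K i) *ᵥ v = ∑ i, c i • (K i *ᵥ v) := by
  funext q
  simp only [Matrix.mulVec, dotProduct, Matrix.sum_apply, Matrix.smul_apply,
    Finset.sum_apply, Pi.smul_apply, smul_eq_mul, Finset.sum_mul]
  rw [Finset.sum_comm]
  refine Finset.sum_congr rfl fun i _ => ?_
  rw [Finset.mul_sum]
  exact Finset.sum_congr rfl fun j _ => by ring

/-- If `ρ(Σᵢ pᵢ Mᵢ ⊗ Mᵢ) < 1` with `pᵢ ≥ 0`, `Σ pᵢ ≤ 1`, then for every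
symmetric positive definite `C` the map `T ↦ Σᵢ pᵢ Mᵢᵀ T Mᵢ + C` has a unique
symmetric fixed point `T*`, which is positive definite and satisfies `T* ⪰ C`. -/
theorem mixed_lyapunov_unique_fixed_point {n m : ℕ}
    (M : Fin m → Matrix (Fin n) (Fin n) ℝ)
    (p : Fin m → ℝ) (hp : ∀ i, 0 ≤ p i) (hp1 : ∑ i, p i ≤ 1)
    (hρ : specRad (∑ i, p i • (M i ⊗ₖ M i)) < 1)
    (C : Matrix (Fin n) (Fin n) ℝ) (hC : C.IsSymm) (hCpd : C.PosDef) :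
    ∃ Tstar : Matrix (Fin n) (Fin n) ℝ,
      Tstar.IsSymm ∧ Tstar = (∑ i, p i • ((M i)ᵀ * Tstar * M i)) + C ∧
      Tstar.PosDef ∧ (Tstar - C).PosSemidef ∧
      ∀ T : Matrix (Fin n) (Fin n) ℝ, T.IsSymm →
        T = (∑ i, p i • ((M i)ᵀ * T * M i)) + C → T = Tstar := by
  classical
  set A : Matrix (Fin n × Fin n) (Fin n × Fin n) ℝ := ∑ i, p i • (M i ⊗ₖ M i) with hA
  -- the linear operator
  set L : Matrix (Fin n) (Fin n) ℝ →ₗ[ℝ] Matrix (Fin n) (Fin n) ℝ :=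
    { toFun := fun T => ∑ i, p i • ((M i)ᵀ * T * M i)
      map_add' := by
        intro X Y
        simp [Matrix.mul_add, Matrix.add_mul, smul_add, Finset.sum_add_distrib]
      map_smul' := by
        intro c X
        simp only [RingHom.id_apply, Finset.smul_sum]
        refine Finset.sum_congr rfl fun i _ => ?_
        rw [Matrix.mul_smul, Matrix.smul_mul, smul_comm] } with hL
  have hLapp : ∀ T, L T = ∑ i, p i • ((M i)ᵀ * T * M i) := fun T => rfl
  -- vec relation
  have hvec : ∀ T : Matrix (Fin n) (Fin n) ℝ,
      (fun q : Fin n × Fin n => (L T) q.1 q.2) = Aᵀ *ᵥ (fun q : Fin n × Fin n => T q.1 q.2) := by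
    intro T
    have hAT : Aᵀ = ∑ i, p i • ((M i)ᵀ ⊗ₖ (M i)ᵀ) := by
      rw [hA, Matrix.transpose_sum]
      refine Finset.sum_congr rfl fun i _ => ?_
      rw [Matrix.transpose_smul, Matrix.kroneckerMap_transpose]
    rw [hAT, sum_smul_mulVec]
    funext q
    simp only [hLapp, Matrix.sum_apply, Matrix.smul_apply, Finset.sum_apply, Pi.smul_apply,
      smul_eq_mul]
    refine Finset.sum_congr rfl fun i _ => ?_
    have hk := congrFun (kron_mulVec ((M i)ᵀ) ((M i)ᵀ) T) q
    rw [Matrix.transpose_transpose] at hk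
    rw [hk]
  -- iterated vec relation
  have hveck : ∀ (k : ℕ) (T : Matrix (Fin n) (Fin n) ℝ),
      (fun q : Fin n × Fin n => ((L ^ k) T) q.1 q.2)
        = (Aᵀ) ^ k *ᵥ (fun q : Fin n × Fin n => T q.1 q.2) := by
    intro k
    induction k with
    | zero => intro T; simp [Matrix.one_mulVec]
    | succ k ih =>
      intro T
      have h1 : (L ^ (k + 1)) T = (L ^ k) (L T) := by
        rw [pow_succ, Module.End.mul_apply]
      rw [h1, ih (L T), hvec T, Matrix.mulVec_mulVec, ← pow_succ]
  -- entrywise convergence of iterates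
  have hconv : ∀ (T : Matrix (Fin n) (Fin n) ℝ) (i j : Fin n),
      Tendsto (fun k => ((L ^ k) T) i j) atTop (𝓝 0) := by
    intro T i j
    have hAk : ∀ k, ((L ^ k) T) i j
        = ∑ q : Fin n × Fin n, (A ^ k) q (i, j) * T q.1 q.2 := by
      intro k
      have h2 := congrFun (hveck k T) (i, j)
      simp only at h2
      rw [h2, ← Matrix.transpose_pow]
      simp [Matrix.mulVec, dotProduct, Matrix.transpose_apply]
    simp only [hAk]
    have h3 := tendsto_finset_sum (Finset.univ : Finset (Fin n × Fin n))
      (fun q _ => ((entry_pow_tendsto_zero hρ q (i, j)).mul_const (T q.1 q.2)))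
    simpa using h3
  -- fixed points of L are zero
  have hzero : ∀ X, X = L X → X = 0 := by
    intro X hX
    have hfixk : ∀ k, (L ^ k) X = X := by
      intro k
      induction k with
      | zero => simp
      | succ k ih => rw [pow_succ, Module.End.mul_apply, ← hX, ih]
    ext i j
    have h1 := hconv X i j
    simp only [hfixk] at h1
    simpa using tendsto_nhds_unique tendsto_const_nhds h1
  -- existence of the fixed point
  have hinj : Function.Injective ((LinearMap.id : Matrix (Fin n) (Fin n) ℝ →ₗ[ℝ] Matrix (Fin n) (Fin n) ℝ) - L) := by
    intro X Y hXY
    have h2 : X - L X = Y - L Y := by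
      simpa [LinearMap.sub_apply] using hXY
    have h1 : X - Y = L (X - Y) := by
      rw [map_sub]
      exact sub_eq_sub_iff_sub_eq_sub.mp h2
    exact sub_eq_zero.mp (hzero _ h1)
  obtain ⟨T₀, hT₀⟩ := (LinearMap.injective_iff_surjective).mp hinj C
  have hfix₀ : T₀ = L T₀ + C := by
    have h1 : T₀ - L T₀ = C := by simpa [LinearMap.sub_apply] using hT₀
    rw [← h1]; abel
  have huniq : ∀ T, T = L T + C → T = T₀ := by
    intro T hT
    have h1 : T - T₀ = L (T - T₀) := by
      calc T - T₀ = (L T + C) - (L T₀ + C) := by rw [← hT, ← hfix₀]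
      _ = L T - L T₀ := by abel
      _ = L (T - T₀) := (map_sub L T T₀).symm
    exact sub_eq_zero.mp (hzero _ h1)
  -- symmetry
  have hLT : ∀ T : Matrix (Fin n) (Fin n) ℝ, (L T)ᵀ = L Tᵀ := by
    intro T
    simp only [hLapp, Matrix.transpose_sum, Matrix.transpose_smul, Matrix.transpose_mul,
      Matrix.transpose_transpose, Matrix.mul_assoc]
  have hsymm₀ : T₀.IsSymm := by
    have h1 : T₀ᵀ = L T₀ᵀ + C := by
      calc T₀ᵀ = (L T₀ + C)ᵀ := by rw [← hfix₀]
      _ = (L T₀)ᵀ + Cᵀ := Matrix.transpose_add _ _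
      _ = L T₀ᵀ + C := by rw [hLT, hC]
    exact huniq _ h1
  -- positive semidefiniteness machinery
  have hLpsd : ∀ T : Matrix (Fin n) (Fin n) ℝ, T.PosSemidef → (L T).PosSemidef := by
    intro T hT
    rw [hLapp]
    refine Finset.sum_induction _ _ (fun a b ha hb => ha.add hb) Matrix.PosSemidef.zero
      (fun i _ => ?_)
    have h1 : ((M i)ᵀ * T * M i).PosSemidef := by
      have := hT.conjTranspose_mul_mul_same (M i)
      rwa [Matrix.conjTranspose_eq_transpose_of_trivial] at this
    refine Matrix.PosSemidef.of_dotProduct_mulVec_nonneg ?_ fun x => ?_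
    · have h2 : ((M i)ᵀ * T * M i)ᵀ = (M i)ᵀ * T * M i := by
        have h3 := h1.1.eq
        rwa [Matrix.conjTranspose_eq_transpose_of_trivial] at h3
      show (p i • ((M i)ᵀ * T * M i))ᴴ = _
      rw [Matrix.conjTranspose_eq_transpose_of_trivial, Matrix.transpose_smul, h2]
    · rw [Matrix.smul_mulVec, dotProduct_smul, smul_eq_mul]
      exact mul_nonneg (hp i) (h1.dotProduct_mulVec_nonneg x)
  have hpowpsd : ∀ k, ((L ^ k) C).PosSemidef := by
    intro k
    induction k with
    | zero => simpa using hCpd.posSemidef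
    | succ k ih =>
      rw [pow_succ', Module.End.mul_apply]
      exact hLpsd _ ih
  have hSpsd : ∀ k : ℕ, (∑ j ∈ Finset.range k, (L ^ j) C).PosSemidef := by
    intro k
    induction k with
    | zero => simpa using Matrix.PosSemidef.zero
    | succ k ih =>
      rw [Finset.sum_range_succ]
      exact ih.add (hpowpsd k)
  have hSk : ∀ k : ℕ, T₀ = (∑ j ∈ Finset.range k, (L ^ j) C) + (L ^ k) T₀ := by
    intro k
    induction k with
    | zero => simp
    | succ k ih =>
      rw [Finset.sum_range_succ]
      calc T₀ = (∑ j ∈ Finset.range k, (L ^ j) C) + (L ^ k) T₀ := ih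
      _ = (∑ j ∈ Finset.range k, (L ^ j) C) + ((L ^ k) C + (L ^ (k + 1)) T₀) := by
          congr 1
          have h4 : (L ^ k) T₀ = (L ^ k) (L T₀ + C) := by rw [← hfix₀]
          rw [h4, map_add, pow_succ, Module.End.mul_apply]
          abel
      _ = _ := by abel
  -- quadratic form nonnegativity
  have hquad : ∀ x : Fin n → ℝ, 0 ≤ x ⬝ᵥ (T₀ *ᵥ x) := by
    intro x
    have hg : Tendsto (fun k => x ⬝ᵥ (((L ^ k) T₀) *ᵥ x)) atTop (𝓝 0) := by
      have h5 : ∀ k, x ⬝ᵥ (((L ^ k) T₀) *ᵥ x)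
          = ∑ i, ∑ j, x i * ((L ^ k) T₀) i j * x j := by
        intro k
        simp [dotProduct, Matrix.mulVec, Finset.mul_sum, mul_assoc]
      simp only [h5]
      have h6 := tendsto_finset_sum (Finset.univ : Finset (Fin n)) (fun i _ =>
        tendsto_finset_sum (Finset.univ : Finset (Fin n)) (fun j _ =>
          (((hconv T₀ i j).const_mul (x i)).mul_const (x j))))
      simpa using h6
    have hge : ∀ k, x ⬝ᵥ (((L ^ k) T₀) *ᵥ x) ≤ x ⬝ᵥ (T₀ *ᵥ x) := by
      intro k
      have hs := (hSpsd k).dotProduct_mulVec_nonneg x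
      simp only [star_trivial] at hs
      conv_rhs => rw [hSk k]
      rw [Matrix.add_mulVec, dotProduct_add]
      linarith
    exact le_of_tendsto' hg hge
  have hT₀psd : T₀.PosSemidef := by
    refine Matrix.PosSemidef.of_dotProduct_mulVec_nonneg ?_ fun x => by simpa using hquad x
    rwa [Matrix.IsHermitian, Matrix.conjTranspose_eq_transpose_of_trivial]
  have hdiff : T₀ - C = L T₀ := by
    conv_lhs => rw [hfix₀]
    abel
  have hdpsd : (T₀ - C).PosSemidef := hdiff ▸ hLpsd T₀ hT₀psd
  have hpd : T₀.PosDef := by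
    have h7 := Matrix.PosDef.posSemidef_add hdpsd hCpd
    simpa using h7
  exact ⟨T₀, hsymm₀, hfix₀, hpd, hdpsd, fun T _ hT => huniq T hT⟩
end

section
/- Let A ∈ R^{n×n}, B ∈ R^{n×m}, R ∈ R^{m×m} positive definite, Q ∈ R^{n×n} positive definite, and suppose T positive definite satisfies g(T) := A^T (B R^{-1} B^T + T^{-1})^{-1} A + Q ≺ T. Then the sequence T_k = g^k(T) is monotonically nonincreasing (T_{k+1} ⪯ T_k for all k), bounded below by Q, and hence converges to a positive definite fixed point T∞ of g with Q ⪯ T∞ ⪯ T. -/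
open Matrix Filter Topology
lemma riccati_aux_inv_antitone {n : ℕ} {A B : Matrix (Fin n) (Fin n) ℝ}
    (hA : A.PosDef) (hB : B.PosDef) (hAB : (B - A).PosSemidef) :
    (A⁻¹ - B⁻¹).PosSemidef := by
  have hAd : IsUnit A.det := hA.det_pos.ne'.isUnit
  have hBd : IsUnit B.det := hB.det_pos.ne'.isUnit
  have hA1 : A * A⁻¹ = 1 := Matrix.mul_nonsing_inv A hAd
  have hA2 : A⁻¹ * A = 1 := Matrix.nonsing_inv_mul A hAd
  have hB1 : B * B⁻¹ = 1 := Matrix.mul_nonsing_inv B hBd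
  have hB2 : B⁻¹ * B = 1 := Matrix.nonsing_inv_mul B hBd
  have hA1' : ∀ X : Matrix (Fin n) (Fin n) ℝ, A * (A⁻¹ * X) = X := fun X => by
    rw [← mul_assoc, hA1, one_mul]
  have hA2' : ∀ X : Matrix (Fin n) (Fin n) ℝ, A⁻¹ * (A * X) = X := fun X => by
    rw [← mul_assoc, hA2, one_mul]
  have hB1' : ∀ X : Matrix (Fin n) (Fin n) ℝ, B * (B⁻¹ * X) = X := fun X => by
    rw [← mul_assoc, hB1, one_mul]
  have hB2' : ∀ X : Matrix (Fin n) (Fin n) ℝ, B⁻¹ * (B * X) = X := fun X => by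
    rw [← mul_assoc, hB2, one_mul]
  have key : A⁻¹ - B⁻¹ =
      B⁻¹ * (B - A) * B⁻¹ + (B⁻¹ * (B - A)) * A⁻¹ * (B⁻¹ * (B - A))ᴴ := by
    have hherm : (B⁻¹ * (B - A))ᴴ = (B - A) * B⁻¹ := by
      rw [conjTranspose_mul, hAB.isHermitian.eq, hB.inv.isHermitian.eq]
    rw [hherm]
    simp only [sub_mul, mul_sub, mul_assoc, hA1, hA2, hB1, hB2, hA1', hA2', hB1', hB2',
      mul_one, one_mul]
    abel
  rw [key]
  have h1 : (B⁻¹ * (B - A) * B⁻¹).PosSemidef := by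
    have := hAB.mul_mul_conjTranspose_same B⁻¹
    rwa [hB.inv.isHermitian.eq] at this
  have h2 : ((B⁻¹ * (B - A)) * A⁻¹ * (B⁻¹ * (B - A))ᴴ).PosSemidef :=
    hA.inv.posSemidef.mul_mul_conjTranspose_same _
  exact h1.add h2

section
variable {n m : ℕ} (A : Matrix (Fin n) (Fin n) ℝ) (B : Matrix (Fin n) (Fin m) ℝ)
  (R : Matrix (Fin m) (Fin m) ℝ)

lemma riccati_aux_M_psd (hR : R.PosDef) : (B * R⁻¹ * Bᵀ).PosSemidef := by
  have := hR.inv.posSemidef.mul_mul_conjTranspose_same B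
  rwa [conjTranspose_eq_transpose_of_trivial] at this

lemma riccati_aux_inner_pd (hR : R.PosDef) {X : Matrix (Fin n) (Fin n) ℝ} (hX : X.PosDef) :
    (B * R⁻¹ * Bᵀ + X⁻¹).PosDef :=
  Matrix.PosDef.posSemidef_add (riccati_aux_M_psd B R hR) hX.inv

lemma riccati_aux_g_pd (hR : R.PosDef) {Q : Matrix (Fin n) (Fin n) ℝ} (hQ : Q.PosDef)
    {X : Matrix (Fin n) (Fin n) ℝ} (hX : X.PosDef) :
    (Aᵀ * (B * R⁻¹ * Bᵀ + X⁻¹)⁻¹ * A + Q).PosDef := by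
  have h1 : (Aᵀ * (B * R⁻¹ * Bᵀ + X⁻¹)⁻¹ * A).PosSemidef := by
    have := (riccati_aux_inner_pd B R hR hX).inv.posSemidef.conjTranspose_mul_mul_same A
    rwa [conjTranspose_eq_transpose_of_trivial] at this
  exact Matrix.PosDef.posSemidef_add h1 hQ

/-- monotonicity of g -/
lemma riccati_aux_g_mono (hR : R.PosDef) {Q : Matrix (Fin n) (Fin n) ℝ}
    {X Y : Matrix (Fin n) (Fin n) ℝ} (hX : X.PosDef) (hY : Y.PosDef)
    (hXY : (X - Y).PosSemidef) :
    ((Aᵀ * (B * R⁻¹ * Bᵀ + X⁻¹)⁻¹ * A + Q) - (Aᵀ * (B * R⁻¹ * Bᵀ + Y⁻¹)⁻¹ * A + Q)).PosSemidef := by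
  set M := B * R⁻¹ * Bᵀ with hM
  have hinv : (Y⁻¹ - X⁻¹).PosSemidef := riccati_aux_inv_antitone hY hX hXY
  have hsum : ((M + Y⁻¹) - (M + X⁻¹)).PosSemidef := by
    have : (M + Y⁻¹) - (M + X⁻¹) = Y⁻¹ - X⁻¹ := by abel
    rwa [this]
  have h2 : ((M + X⁻¹)⁻¹ - (M + Y⁻¹)⁻¹).PosSemidef :=
    riccati_aux_inv_antitone (riccati_aux_inner_pd B R hR hX)
      (riccati_aux_inner_pd B R hR hY) hsum
  have h3 := h2.conjTranspose_mul_mul_same A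
  rw [conjTranspose_eq_transpose_of_trivial] at h3
  have heq : (Aᵀ * (M + X⁻¹)⁻¹ * A + Q) - (Aᵀ * (M + Y⁻¹)⁻¹ * A + Q)
      = Aᵀ * ((M + X⁻¹)⁻¹ - (M + Y⁻¹)⁻¹) * A := by
    rw [mul_sub, sub_mul]; abel
  rwa [heq]

end


/-- The positive semidefinite matrices are closed under limits. -/
lemma riccati_aux_psd_limit {n : ℕ} {F : ℕ → Matrix (Fin n) (Fin n) ℝ}
    {M : Matrix (Fin n) (Fin n) ℝ} (hF : ∀ k, (F k).PosSemidef)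
    (hlim : Tendsto F atTop (𝓝 M)) : M.PosSemidef := by
  refine Matrix.PosSemidef.of_dotProduct_mulVec_nonneg ?_ ?_
  · have h1 : Tendsto (fun k => (F k)ᴴ) atTop (𝓝 Mᴴ) :=
      ((continuous_id.matrix_conjTranspose).tendsto M).comp hlim
    have h2 : (fun k => (F k)ᴴ) = F := funext fun k => (hF k).isHermitian.eq
    rw [h2] at h1
    exact tendsto_nhds_unique h1 hlim
  · intro x
    have hc : Continuous fun N : Matrix (Fin n) (Fin n) ℝ => star x ⬝ᵥ N *ᵥ x :=
      (continuous_const).dotProduct (continuous_id.matrix_mulVec continuous_const)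
    have h1 : Tendsto (fun k => star x ⬝ᵥ (F k) *ᵥ x) atTop (𝓝 (star x ⬝ᵥ M *ᵥ x)) :=
      (hc.tendsto M).comp hlim
    exact ge_of_tendsto' h1 fun k => (hF k).dotProduct_mulVec_nonneg x

/-- Entrywise formula from quadratic forms, for symmetric matrices. -/
lemma riccati_aux_entry {n : ℕ} {S : Matrix (Fin n) (Fin n) ℝ} (hS : S.IsHermitian)
    (i j : Fin n) :
    S i j = ((Pi.single i 1 + Pi.single j 1) ⬝ᵥ S *ᵥ (Pi.single i 1 + Pi.single j 1)
      - Pi.single i 1 ⬝ᵥ S *ᵥ Pi.single i 1 - Pi.single j 1 ⬝ᵥ S *ᵥ Pi.single j 1) / 2 := by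
  have hsym : S j i = S i j := by
    have := hS.apply j i
    simpa using this.symm
  simp [mulVec_single, add_dotProduct, dotProduct_add, mulVec_add, dotProduct_single, hsym]
  ring


lemma riccati_aux_converge {n : ℕ} {S : ℕ → Matrix (Fin n) (Fin n) ℝ}
    (hherm : ∀ k, (S k).IsHermitian)
    (hmono : ∀ k, (S k - S (k + 1)).PosSemidef)
    {Q : Matrix (Fin n) (Fin n) ℝ} (hbdd : ∀ k, (S k - Q).PosSemidef) :
    ∃ Tinf : Matrix (Fin n) (Fin n) ℝ, Tendsto S atTop (𝓝 Tinf) := by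
  set q : (Fin n → ℝ) → ℕ → ℝ := fun x k => x ⬝ᵥ S k *ᵥ x with hq
  have hanti : ∀ x, Antitone (q x) := by
    intro x
    apply antitone_nat_of_succ_le
    intro k
    have h := (hmono k).dotProduct_mulVec_nonneg x
    simp only [star_trivial, sub_mulVec, dotProduct_sub] at h
    linarith
  have hbelow : ∀ x, BddBelow (Set.range (q x)) := by
    intro x
    refine ⟨x ⬝ᵥ Q *ᵥ x, ?_⟩
    rintro y ⟨k, rfl⟩
    have h := (hbdd k).dotProduct_mulVec_nonneg x
    simp only [star_trivial, sub_mulVec, dotProduct_sub] at h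
    simp only [hq]
    linarith
  have hconv : ∀ x, Tendsto (q x) atTop (𝓝 (⨅ k, q x k)) := fun x =>
    tendsto_atTop_ciInf (hanti x) (hbelow x)
  set L : (Fin n → ℝ) → ℝ := fun x => ⨅ k, q x k with hL
  refine ⟨Matrix.of fun i j =>
    (L (Pi.single i 1 + Pi.single j 1) - L (Pi.single i 1) - L (Pi.single j 1)) / 2, ?_⟩
  refine tendsto_pi_nhds.mpr ?_
  intro i
  rw [tendsto_pi_nhds]
  intro j
  have hentry : (fun k => S k i j) = fun k =>
      (q (Pi.single i 1 + Pi.single j 1) k - q (Pi.single i 1) k - q (Pi.single j 1) k) / 2 :=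
    funext fun k => riccati_aux_entry (hherm k) i j
  rw [hentry]
  simpa using (((hconv _).sub (hconv _)).sub (hconv _)).div_const 2

/-- If `T ≻ g(T)` where `g(T) = Aᵀ (B R⁻¹ Bᵀ + T⁻¹)⁻¹ A + Q` with `R`, `Q`, `T`
positive definite, then the iterates `g^[k] T` are nonincreasing, bounded below
by `Q`, and converge to a positive definite fixed point `T∞` with `Q ⪯ T∞ ⪯ T`. -/
theorem riccati_iterates_converge {n m : ℕ}
    (A : Matrix (Fin n) (Fin n) ℝ) (B : Matrix (Fin n) (Fin m) ℝ)
    (R : Matrix (Fin m) (Fin m) ℝ) (hR : R.PosDef)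
    (Q : Matrix (Fin n) (Fin n) ℝ) (hQ : Q.PosDef)
    (g : Matrix (Fin n) (Fin n) ℝ → Matrix (Fin n) (Fin n) ℝ)
    (hg : g = fun T => Aᵀ * (B * R⁻¹ * Bᵀ + T⁻¹)⁻¹ * A + Q)
    (T : Matrix (Fin n) (Fin n) ℝ) (hT : T.PosDef)
    (hdec : (T - g T).PosDef) :
    (∀ k : ℕ, (g^[k] T - g^[k + 1] T).PosSemidef) ∧
    (∀ k : ℕ, (g^[k] T - Q).PosSemidef) ∧
    ∃ Tinf : Matrix (Fin n) (Fin n) ℝ,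
      Tendsto (fun k => g^[k] T) atTop (𝓝 Tinf) ∧
      Tinf.PosDef ∧ g Tinf = Tinf ∧
      (Tinf - Q).PosSemidef ∧ (T - Tinf).PosSemidef := by
  set S : ℕ → Matrix (Fin n) (Fin n) ℝ := fun k => g^[k] T with hS
  have hSsucc : ∀ k, S (k + 1) = g (S k) := fun k => Function.iterate_succ_apply' g k T
  have hSpd : ∀ k, (S k).PosDef := by
    intro k
    induction k with
    | zero => exact hT
    | succ k ih =>
      rw [hSsucc k, hg]
      exact riccati_aux_g_pd A B R hR hQ ih
  have hmono : ∀ k, (S k - S (k + 1)).PosSemidef := by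
    intro k
    induction k with
    | zero =>
      have h0 : S 0 = T := rfl
      rw [h0, hSsucc 0, h0]
      exact hdec.posSemidef
    | succ k ih =>
      have hpd2 := hSpd (k + 1)
      rw [hSsucc k] at ih hpd2
      rw [hSsucc (k + 1), hSsucc k]
      simp only [hg] at ih hpd2 ⊢
      exact riccati_aux_g_mono A B R hR (hSpd k) hpd2 ih
  have hgQ : ∀ X : Matrix (Fin n) (Fin n) ℝ, X.PosDef → (g X - Q).PosSemidef := by
    intro X hX
    have h1 : (Aᵀ * (B * R⁻¹ * Bᵀ + X⁻¹)⁻¹ * A).PosSemidef := by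
      have := (riccati_aux_inner_pd B R hR hX).inv.posSemidef.conjTranspose_mul_mul_same A
      rwa [conjTranspose_eq_transpose_of_trivial] at this
    have : g X - Q = Aᵀ * (B * R⁻¹ * Bᵀ + X⁻¹)⁻¹ * A := by
      simp only [hg]; abel
    rwa [this]
  have hbdd : ∀ k, (S k - Q).PosSemidef := by
    intro k
    cases k with
    | zero =>
      have h1 : (T - g T) + (g T - Q) = T - Q := by abel
      have h2 := hdec.posSemidef.add (hgQ T hT)
      rwa [h1] at h2
    | succ k =>
      rw [hSsucc k]
      exact hgQ _ (hSpd k)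
  refine ⟨hmono, hbdd, ?_⟩
  obtain ⟨Tinf, htend⟩ :=
    riccati_aux_converge (fun k => (hSpd k).isHermitian) hmono hbdd
  have hTQ : (Tinf - Q).PosSemidef :=
    riccati_aux_psd_limit (fun k => hbdd k) (htend.sub tendsto_const_nhds)
  have hTinfpd : Tinf.PosDef := by
    have h := hQ.add_posSemidef hTQ
    rwa [add_sub_cancel] at h
  have hTub : ∀ k, (T - S k).PosSemidef := by
    intro k
    induction k with
    | zero =>
      have h0 : S 0 = T := rfl
      rw [h0, sub_self]
      exact Matrix.PosSemidef.zero
    | succ k ih =>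
      have h1 : (T - S k) + (S k - S (k + 1)) = T - S (k + 1) := by abel
      have h2 := ih.add (hmono k)
      rwa [h1] at h2
  have hTT : (T - Tinf).PosSemidef :=
    riccati_aux_psd_limit hTub (tendsto_const_nhds.sub htend)
  -- continuity of g at Tinf
  have cinv : ∀ X : Matrix (Fin n) (Fin n) ℝ, X.PosDef →
      ContinuousAt (fun Y : Matrix (Fin n) (Fin n) ℝ => Y⁻¹) X := by
    intro X hX
    apply continuousAt_matrix_inv
    rw [Ring.inverse_eq_inv']
    exact continuousAt_inv₀ hX.det_pos.ne'
  have hgc : ContinuousAt g Tinf := by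
    rw [hg]
    have c1 := cinv Tinf hTinfpd
    have c2 := cinv _ (riccati_aux_inner_pd B R hR hTinfpd)
    have c3 : ContinuousAt (fun Y : Matrix (Fin n) (Fin n) ℝ => B * R⁻¹ * Bᵀ + Y⁻¹) Tinf :=
      continuousAt_const.add c1
    have c4 : ContinuousAt (fun Y : Matrix (Fin n) (Fin n) ℝ => (B * R⁻¹ * Bᵀ + Y⁻¹)⁻¹) Tinf :=
      ContinuousAt.comp (g := fun X : Matrix (Fin n) (Fin n) ℝ => X⁻¹)
        (f := fun Y : Matrix (Fin n) (Fin n) ℝ => B * R⁻¹ * Bᵀ + Y⁻¹) c2 c3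
    exact ((continuousAt_const.mul c4).mul continuousAt_const).add continuousAt_const
  have h1 : Tendsto (fun k => S (k + 1)) atTop (𝓝 Tinf) :=
    htend.comp (tendsto_add_atTop_nat 1)
  have h2 : Tendsto (fun k => g (S k)) atTop (𝓝 (g Tinf)) :=
    hgc.tendsto.comp htend
  have h3 : (fun k => S (k + 1)) = fun k => g (S k) := funext hSsucc
  rw [h3] at h1
  exact ⟨Tinf, htend, hTinfpd, tendsto_nhds_unique h2 h1, hTQ, hTT⟩
end
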